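/- Let 𝕂 = ℝ or ℂ. If the SDP feasible set 𝒞 = {X ∈ S^{n×n} : X ⪰ 0 and 𝒜(X) = b} is compact, then for every k ≥ 1 the factorized feasible set ℳ_k = {Y ∈ 𝕂^{n×k} : 𝒜(YY*) = b} is compact. -/

import Mathlib

open scoped Matrix BigOperators ComplexOrder
open MeasureTheory ProbabilityTheory

noncomputable section

namespace SmoothedBM

variable {𝕂 : Type*} [RCLike 𝕂]

/-- Real Frobenius inner product `⟨A,B⟩ = Re tr(Aᴴ B)`. -/
def finner {n k : ℕ} (A B : Matrix (Fin n) (Fin k) 𝕂) : ℝ :=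
  RCLike.re (Matrix.trace (Aᴴ * B))

/-- Frobenius norm. -/
def fnorm {n k : ℕ} (A : Matrix (Fin n) (Fin k) 𝕂) : ℝ :=
  Real.sqrt (finner A A)

/-- Spectral (operator) norm: the largest singular value, i.e. the square root of the
largest eigenvalue of `Aᴴ * A`. -/
def opNorm {n k : ℕ} (A : Matrix (Fin n) (Fin k) 𝕂) : ℝ :=
  ⨆ i, Real.sqrt ((Matrix.isHermitian_conjTranspose_mul_self A).eigenvalues i)

/-- The `k`-th (smallest) singular value of an `n × k` matrix: the square root of the
smallest eigenvalue of `Yᴴ * Y`.  (It is `0` when `k > n`.) -/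
def sigmaLast {n k : ℕ} (Y : Matrix (Fin n) (Fin k) 𝕂) : ℝ :=
  Real.sqrt (⨅ i, (Matrix.isHermitian_conjTranspose_mul_self Y).eigenvalues i)

/-- Squared singular values of an `n × n` matrix, sorted in increasing order
(eigenvalues of `Aᴴ * A`, sorted). -/
def svSqAsc {n : ℕ} (A : Matrix (Fin n) (Fin n) 𝕂) : Fin n → ℝ := fun i =>
  (Matrix.isHermitian_conjTranspose_mul_self A).eigenvalues
    (Tuple.sort ((Matrix.isHermitian_conjTranspose_mul_self A).eigenvalues) i)

/-- Sum of the squares of the `k` smallest singular values of an `n × n` matrix. -/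
def sumSqSmallestSV {n : ℕ} (k : ℕ) (A : Matrix (Fin n) (Fin n) 𝕂) : ℝ :=
  ∑ i : Fin n, if (i : ℕ) < k then svSqAsc A i else 0

open Classical in
/-- Smallest eigenvalue of a self-adjoint matrix (junk value `0` if not self-adjoint). -/
def lambdaMin {n : ℕ} (A : Matrix (Fin n) (Fin n) 𝕂) : ℝ :=
  if hA : A.IsHermitian then ⨅ i, hA.eigenvalues i else 0

open Classical in
/-- Number of eigenvalues of a self-adjoint matrix lying in a set `I ⊆ ℝ`
(junk value `0` if not self-adjoint). -/
def eigCountIn {n : ℕ} (A : Matrix (Fin n) (Fin n) 𝕂) (I : Set ℝ) : ℕ :=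
  if hA : A.IsHermitian then (Finset.univ.filter fun i => hA.eigenvalues i ∈ I).card else 0

variable {n m k : ℕ}

/-- The constraint map `𝒜(Z)ᵢ = ⟨Aᵢ, Z⟩`. -/
def calA (A : Fin m → Matrix (Fin n) (Fin n) 𝕂) (Z : Matrix (Fin n) (Fin n) 𝕂) :
    Fin m → ℝ := fun i => finner (A i) Z

/-- The adjoint map `𝒜*(μ) = ∑ᵢ μᵢ Aᵢ`. -/
def calAstar (A : Fin m → Matrix (Fin n) (Fin n) 𝕂) (μ : Fin m → ℝ) :
    Matrix (Fin n) (Fin n) 𝕂 := ∑ i, (μ i : 𝕂) • A i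

/-- The SDP feasible set `𝒞`. -/
def SDPSet (A : Fin m → Matrix (Fin n) (Fin n) 𝕂) (b : Fin m → ℝ) :
    Set (Matrix (Fin n) (Fin n) 𝕂) :=
  {X | X.PosSemidef ∧ ∀ i, finner (A i) X = b i}

/-- The factorized feasible set `ℳ_k`. -/
def FactSet (A : Fin m → Matrix (Fin n) (Fin n) 𝕂) (b : Fin m → ℝ) (k : ℕ) :
    Set (Matrix (Fin n) (Fin k) 𝕂) :=
  {Y | ∀ i, finner (A i) (Y * Yᴴ) = b i}

/-- The Gram matrix `G(Y)ᵢⱼ = ⟨AᵢY, AⱼY⟩`. -/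
def gram (A : Fin m → Matrix (Fin n) (Fin n) 𝕂) (Y : Matrix (Fin n) (Fin k) 𝕂) :
    Matrix (Fin m) (Fin m) ℝ :=
  Matrix.of fun i j => finner (A i * Y) (A j * Y)

/-- The four Moore–Penrose identities. -/
def IsMoorePenrose {m : ℕ} (G H : Matrix (Fin m) (Fin m) ℝ) : Prop :=
  G * H * G = G ∧ H * G * H = H ∧ (G * H)ᵀ = G * H ∧ (H * G)ᵀ = H * G

open Classical in
/-- The Moore–Penrose pseudo-inverse (the unique matrix satisfying the four
Moore–Penrose identities; junk value `0` if none exists). -/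
def pinv {m : ℕ} (G : Matrix (Fin m) (Fin m) ℝ) : Matrix (Fin m) (Fin m) ℝ :=
  if h : ∃ H, IsMoorePenrose G H then h.choose else 0

/-- The matrix `S(Y) = C − 𝒜*(G(Y)† 𝒜(C Y Yᴴ))`. -/
def Smat (A : Fin m → Matrix (Fin n) (Fin n) 𝕂) (C : Matrix (Fin n) (Fin n) 𝕂)
    (Y : Matrix (Fin n) (Fin k) 𝕂) : Matrix (Fin n) (Fin n) 𝕂 :=
  C - calAstar A (pinv (gram A Y) *ᵥ calA A (C * (Y * Yᴴ)))

/-- `Y` is an `εg`-approximate first-order stationary point of the factorized problem. -/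
def IsFOSP (A : Fin m → Matrix (Fin n) (Fin n) 𝕂) (b : Fin m → ℝ)
    (C : Matrix (Fin n) (Fin n) 𝕂) (Y : Matrix (Fin n) (Fin k) 𝕂) (εg : ℝ) : Prop :=
  Y ∈ FactSet A b k ∧ fnorm ((2 : 𝕂) • (Smat A C Y * Y)) ≤ εg

/-- `Y` is an `(εg, εH)`-approximate second-order stationary point of the factorized problem. -/
def IsSOSP (A : Fin m → Matrix (Fin n) (Fin n) 𝕂) (b : Fin m → ℝ)
    (C : Matrix (Fin n) (Fin n) 𝕂) (Y : Matrix (Fin n) (Fin k) 𝕂) (εg εH : ℝ) : Prop :=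
  IsFOSP A b C Y εg ∧
    ∀ V : Matrix (Fin n) (Fin k) 𝕂, (∀ i, finner (A i * Y) V = 0) →
      -εH * (fnorm V) ^ 2 ≤ finner V (Smat A C Y * V)

/-- The smooth-manifold assumption (Assumption 1). -/
def SmoothAssumption (A : Fin m → Matrix (Fin n) (Fin n) 𝕂) (b : Fin m → ℝ) : Prop :=
  ∀ k' : ℕ, k' ≤ n → (FactSet A b k').Nonempty →
    (∀ Y ∈ FactSet A b k', LinearIndependent ℝ fun i => A i * Y) ∨
    (∃ U : Set (Matrix (Fin n) (Fin k') 𝕂), IsOpen U ∧ FactSet A b k' ⊆ U ∧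
      ∃ d : ℕ, ∀ Y ∈ U,
        Module.finrank ℝ (Submodule.span ℝ (Set.range fun i => A i * Y)) = d)

/-- A real Gaussian Wigner matrix with variance `σ²`: a random real symmetric matrix whose
on-and-above-diagonal entries are independent centered Gaussians `N(0, σ²)`. -/
structure IsRealWigner {Ω : Type*} [MeasurableSpace Ω] (μ : Measure Ω) {n : ℕ} (σ : ℝ)
    (W : Ω → Matrix (Fin n) (Fin n) ℝ) : Prop where
  symm : ∀ ω, (W ω)ᵀ = W ω
  meas : ∀ i j, Measurable fun ω => W ω i j
  indep : iIndepFun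
    (fun (p : {p : Fin n × Fin n // p.1 ≤ p.2}) ω => W ω p.val.1 p.val.2) μ
  gauss : ∀ i j : Fin n, i ≤ j →
    Measure.map (fun ω => W ω i j) μ = gaussianReal 0 ⟨σ ^ 2, sq_nonneg σ⟩

/-- The independent real coordinates of a complex Hermitian random matrix:
diagonal entries, and real/imaginary parts of the above-diagonal entries. -/
def wignerParts {Ω : Type*} {n : ℕ} (W : Ω → Matrix (Fin n) (Fin n) ℂ) :
    (Fin n ⊕ {p : Fin n × Fin n // p.1 < p.2} × Bool) → Ω → ℝ
  | Sum.inl i => fun ω => (W ω i i).re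
  | Sum.inr (p, false) => fun ω => (W ω p.val.1 p.val.2).re
  | Sum.inr (p, true) => fun ω => (W ω p.val.1 p.val.2).im

/-- A complex Gaussian Wigner matrix with variance `σ²`: a random Hermitian matrix whose
on-and-above-diagonal entries are independent, the diagonal entries being real `N(0, σ²)` and
the above-diagonal entries having independent `N(0, σ²/2)` real and imaginary parts. -/
structure IsComplexWigner {Ω : Type*} [MeasurableSpace Ω] (μ : Measure Ω) {n : ℕ} (σ : ℝ)
    (W : Ω → Matrix (Fin n) (Fin n) ℂ) : Prop where
  herm : ∀ ω, (W ω).IsHermitian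
  meas : ∀ i j, Measurable fun ω => W ω i j
  indep : iIndepFun (β := fun _ : Fin n ⊕ {p : Fin n × Fin n // p.1 < p.2} × Bool => ℝ)
    (wignerParts W) μ
  diag : ∀ i : Fin n,
    Measure.map (fun ω => (W ω i i).re) μ = gaussianReal 0 ⟨σ ^ 2, sq_nonneg σ⟩
  off_re : ∀ i j : Fin n, i < j →
    Measure.map (fun ω => (W ω i j).re) μ = gaussianReal 0 ⟨σ ^ 2 / 2, by positivity⟩
  off_im : ∀ i j : Fin n, i < j →
    Measure.map (fun ω => (W ω i j).im) μ = gaussianReal 0 ⟨σ ^ 2 / 2, by positivity⟩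

/-! Since `Y ↦ Y * Yᴴ` maps `ℳ_k` into `𝒞` and `re tr (Y * Yᴴ)` is the squared Frobenius norm
of `Y`, a bound on the trace over the compact set `𝒞` bounds every entry of every `Y ∈ ℳ_k`;
being closed, `ℳ_k` is then compact. -/

section TraceBound

variable {ι κ : Type*} [Fintype ι] [Fintype κ]

theorem re_trace_mul_conjTranspose (Y : Matrix ι κ 𝕂) :
    RCLike.re (Y * Yᴴ).trace = ∑ i, ∑ j, ‖Y i j‖ ^ 2 := by
  simp only [Matrix.trace, Matrix.diag, Matrix.mul_apply, Matrix.conjTranspose_apply, map_sum,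
    RCLike.star_def, RCLike.mul_conj]
  norm_cast

theorem norm_sq_le_re_trace_mul_conjTranspose (Y : Matrix ι κ 𝕂) (i : ι) (j : κ) :
    ‖Y i j‖ ^ 2 ≤ RCLike.re (Y * Yᴴ).trace := by
  rw [re_trace_mul_conjTranspose]
  calc ‖Y i j‖ ^ 2 ≤ ∑ j', ‖Y i j'‖ ^ 2 :=
        Finset.single_le_sum (f := fun j' => ‖Y i j'‖ ^ 2) (fun _ _ => sq_nonneg _)
          (Finset.mem_univ j)
    _ ≤ ∑ i', ∑ j', ‖Y i' j'‖ ^ 2 :=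
        Finset.single_le_sum (f := fun i' => ∑ j', ‖Y i' j'‖ ^ 2)
          (fun _ _ => Finset.sum_nonneg fun _ _ => sq_nonneg _) (Finset.mem_univ i)

theorem isCompact_of_isClosed_of_re_trace_mul_conjTranspose_le {S : Set (Matrix ι κ 𝕂)}
    (hS : IsClosed S) (R : ℝ) (hR : ∀ Y ∈ S, RCLike.re (Y * Yᴴ).trace ≤ R) : IsCompact S := by
  have hbox : IsCompact (Set.univ.pi fun _ : ι => Set.univ.pi fun _ : κ =>
      Metric.closedBall (0 : 𝕂) √R) :=
    isCompact_univ_pi fun _ => isCompact_univ_pi fun _ => isCompact_closedBall _ _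
  refine hbox.of_isClosed_subset hS fun Y hY => ?_
  simp only [Set.mem_univ_pi, mem_closedBall_zero_iff]
  exact fun i j => Real.le_sqrt_of_sq_le ((norm_sq_le_re_trace_mul_conjTranspose Y i j).trans
    (hR Y hY))

end TraceBound

theorem isClosed_factSet (A : Fin m → Matrix (Fin n) (Fin n) 𝕂) (b : Fin m → ℝ) (k : ℕ) :
    IsClosed (FactSet A b k) := by
  simp only [FactSet, finner, Set.ofPred_forall]
  exact isClosed_iInter fun i => isClosed_eq (by fun_prop) continuous_const

theorem mul_conjTranspose_mem_sdpSet {A : Fin m → Matrix (Fin n) (Fin n) 𝕂} {b : Fin m → ℝ}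
    {Y : Matrix (Fin n) (Fin k) 𝕂} (hY : Y ∈ FactSet A b k) : Y * Yᴴ ∈ SDPSet A b :=
  ⟨Matrix.posSemidef_self_mul_conjTranspose Y, hY⟩

theorem factSet_compact_of_sdpSet_compact_general
    {𝕂 : Type*} [RCLike 𝕂] {n m : ℕ}
    (A : Fin m → Matrix (Fin n) (Fin n) 𝕂)
    (b : Fin m → ℝ)
    (hcpt : IsCompact (SDPSet A b)) (k : ℕ) :
    IsCompact (FactSet A b k) := by
  have hre_trace : Continuous fun X : Matrix (Fin n) (Fin n) 𝕂 => RCLike.re X.trace := by fun_prop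
  obtain ⟨R, hR⟩ := (hcpt.image hre_trace).bddAbove
  exact isCompact_of_isClosed_of_re_trace_mul_conjTranspose_le (isClosed_factSet A b k) R
    fun Y hY => hR ⟨_, mul_conjTranspose_mem_sdpSet hY, rfl⟩

/-- if the SDP feasible set is compact then so is each factorized
feasible set. -/
theorem factSet_compact_of_sdpSet_compact
    {𝕂 : Type*} [RCLike 𝕂] {n m : ℕ} (hn : 0 < n) (hm : 0 < m)
    (A : Fin m → Matrix (Fin n) (Fin n) 𝕂) (hA : ∀ i, (A i).IsHermitian)
    (b : Fin m → ℝ)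
    (hcpt : IsCompact (SDPSet A b)) (k : ℕ) (hk : 1 ≤ k) :
    IsCompact (FactSet A b k) :=
  factSet_compact_of_sdpSet_compact_general A b hcpt k

end SmoothedBM
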